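/- Let 𝒪 be an order ideal in P = K[x_0,…,x_n], fix a labeling of ∂𝒪 ordered increasingly by degree, and let G be a homogeneous ∂𝒪-prebasis. Then the border reduction relation →⁺_G is confluent: if f ∈ P and h_1, h_2 ∈ ⟨𝒪⟩ satisfy f →⁺_G h_1 and f →⁺_G h_2, then h_1 = h_2. Consequently every f ∈ P reduces via →⁺_G to a unique polynomial with support contained in 𝒪. -/

import Mathlib

open MvPolynomial

namespace Border

/-- A term of `K[x_0, …, x_n]`, identified with its exponent vector. -/
abbrev Term (n : ℕ) := Fin (n + 1) →₀ ℕ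

variable {n : ℕ}

/-- The (standard) degree of a term. -/
def tdeg (m : Term n) : ℕ := ∑ i, m i

/-- An order ideal: a nonempty set of terms closed under divisors. -/
def IsOrderIdeal (O : Set (Term n)) : Prop :=
  O.Nonempty ∧ ∀ τ ∈ O, ∀ τ' : Term n, τ' ≤ τ → τ' ∈ O

/-- The border `∂𝒪 = (x_0·𝒪 ∪ ⋯ ∪ x_n·𝒪) ∖ 𝒪`. -/
def border (O : Set (Term n)) : Set (Term n) :=
  {σ | σ ∉ O ∧ ∃ r : Fin (n + 1), ∃ τ ∈ O, σ = τ + Finsupp.single r 1}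

/-- Multiplicative set of a border term `σ`, with respect to a labeling `lab` of the border:
`𝒯_σ = {η : σ' ∤ η·σ for every border term σ' with a larger label}`. -/
def mulSet (O : Set (Term n)) (lab : Term n → ℕ) (σ : Term n) : Set (Term n) :=
  {η | ∀ σ' ∈ border O, lab σ < lab σ' → ¬ σ' ≤ η + σ}

/-- The cone `C(σ) = {η·σ : η ∈ 𝒯_σ}`. -/
def cone (O : Set (Term n)) (lab : Term n → ℕ) (σ : Term n) : Set (Term n) :=
  (fun η => η + σ) '' mulSet O lab σ

/-- A labeling of the border which is injective and ordered increasingly by degree. -/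
def DegOrderedLabeling (O : Set (Term n)) (lab : Term n → ℕ) : Prop :=
  Set.InjOn lab (border O) ∧
    ∀ σ ∈ border O, ∀ σ' ∈ border O, lab σ < lab σ' → tdeg σ ≤ tdeg σ'

/-- Iterated border closures: `∂⁰𝒪 := 𝒪`, and the `(k+1)`-st closure adds the border. -/
def borderClosure (O : Set (Term n)) : ℕ → Set (Term n)
  | 0 => O
  | k + 1 => borderClosure O k ∪ border (borderClosure O k)

/-- The index `ind_𝒪(τ)`: the least `k` with `τ ∈ ∂^k𝒪`. -/
noncomputable def ind (O : Set (Term n)) (τ : Term n) : ℕ :=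
  sInf {k | τ ∈ borderClosure O k}

/-- Degree-`d` part of a set of terms. -/
def Od (O : Set (Term n)) (d : ℕ) : Set (Term n) := {τ | τ ∈ O ∧ tdeg τ = d}

variable {K : Type*} [Field K]

/-- The index of a nonzero polynomial: the maximal index of a term of its support. -/
noncomputable def indP (O : Set (Term n)) (f : MvPolynomial (Fin (n + 1)) K) : ℕ :=
  f.support.sup (ind O)

/-- A homogeneous `∂𝒪`-prebasis: a family `g σ = σ - Σ_{τ ∈ 𝒪_{deg σ}} c_{στ} τ`. -/
def IsPrebasis (O : Set (Term n)) (g : Term n → MvPolynomial (Fin (n + 1)) K) : Prop :=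
  ∀ σ ∈ border O, ∀ τ ∈ (monomial σ (1 : K) - g σ).support, τ ∈ O ∧ tdeg τ = tdeg σ

/-- The set of border reductors `𝒯G = {η·g_σ : σ ∈ ∂𝒪, η ∈ 𝒯_σ}`. -/
def reductors (O : Set (Term n)) (lab : Term n → ℕ)
    (g : Term n → MvPolynomial (Fin (n + 1)) K) : Set (MvPolynomial (Fin (n + 1)) K) :=
  {p | ∃ σ ∈ border O, ∃ η ∈ mulSet O lab σ, p = monomial η (1 : K) * g σ}

/-- The degree-`d` border reductors `𝒯G_d = 𝒯G ∩ P_d`. -/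
def reductorsDeg (O : Set (Term n)) (lab : Term n → ℕ)
    (g : Term n → MvPolynomial (Fin (n + 1)) K) (d : ℕ) :
    Set (MvPolynomial (Fin (n + 1)) K) :=
  reductors O lab g ∩ {p | p.IsHomogeneous d}

/-- One step of the border reduction relation `→_G`. -/
def Step (O : Set (Term n)) (lab : Term n → ℕ)
    (g : Term n → MvPolynomial (Fin (n + 1)) K)
    (f h : MvPolynomial (Fin (n + 1)) K) : Prop :=
  ∃ σ ∈ border O, ∃ η ∈ mulSet O lab σ, η + σ ∈ f.support ∧
    h = f - f.coeff (η + σ) • (monomial η (1 : K) * g σ)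

/-- The border reduction relation `→⁺_G` (finitely many, possibly zero, steps). -/
def Reduces (O : Set (Term n)) (lab : Term n → ℕ)
    (g : Term n → MvPolynomial (Fin (n + 1)) K) :
    MvPolynomial (Fin (n + 1)) K → MvPolynomial (Fin (n + 1)) K → Prop :=
  Relation.ReflTransGen (Step O lab g)

/-- The `K`-vector space spanned by a set of terms. -/
noncomputable def spanTerms (K : Type*) [Field K] (S : Set (Term n)) :
    Submodule K (MvPolynomial (Fin (n + 1)) K) :=
  Submodule.span K ((fun τ => monomial τ (1 : K)) '' S)

/-- The ideal `(G)` generated by a `∂𝒪`-prebasis. -/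
noncomputable def idealG (O : Set (Term n)) (g : Term n → MvPolynomial (Fin (n + 1)) K) :
    Ideal (MvPolynomial (Fin (n + 1)) K) :=
  Ideal.span (g '' border O)

/-- The degree-`d` part `I_d` of an ideal, as a `K`-vector subspace. -/
noncomputable def degPart (I : Ideal (MvPolynomial (Fin (n + 1)) K)) (d : ℕ) :
    Submodule K (MvPolynomial (Fin (n + 1)) K) :=
  Submodule.restrictScalars K I ⊓ homogeneousSubmodule (Fin (n + 1)) K d

/-- Homogeneous ideal. -/
def IsHomogeneousIdeal (I : Ideal (MvPolynomial (Fin (n + 1)) K)) : Prop :=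
  ∀ f ∈ I, ∀ d : ℕ, homogeneousComponent d f ∈ I

/-- `G` is a homogeneous `∂𝒪`-basis of `J`: it is a prebasis contained in `J` and for every
`d` one has `P_d = J_d ⊕ ⟨𝒪_d⟩`, i.e. the residue classes of `𝒪_d` are a basis of `P_d/J_d`. -/
def IsBorderBasisOf (O : Set (Term n)) (g : Term n → MvPolynomial (Fin (n + 1)) K)
    (J : Ideal (MvPolynomial (Fin (n + 1)) K)) : Prop :=
  IsPrebasis O g ∧ (∀ σ ∈ border O, g σ ∈ J) ∧
    ∀ d : ℕ, degPart J d ⊔ spanTerms K (Od O d) = homogeneousSubmodule (Fin (n + 1)) K d ∧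
      Disjoint (degPart J d) (spanTerms K (Od O d))

/-- An `m`-lower representation of `f` by `𝒯G`: `f = Σ c_j • η_j·g_{σ_j}` with distinct
pairs `(η_j, σ_j)`, `η_j ∈ 𝒯_{σ_j}` and `ind(η_j σ_j) ≤ m`. -/
def HasLRep (O : Set (Term n)) (lab : Term n → ℕ)
    (g : Term n → MvPolynomial (Fin (n + 1)) K)
    (f : MvPolynomial (Fin (n + 1)) K) (m : ℕ) : Prop :=
  ∃ (s : Finset (Term n × Term n)) (c : Term n × Term n → K),
    (∀ p ∈ s, p.2 ∈ border O ∧ p.1 ∈ mulSet O lab p.2 ∧ ind O (p.1 + p.2) ≤ m) ∧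
    f = ∑ p ∈ s, c p • (monomial p.1 (1 : K) * g p.2)

/-- An `m`-lower representation of `f` by `𝒯G_d`. -/
def HasLRepDeg (O : Set (Term n)) (lab : Term n → ℕ)
    (g : Term n → MvPolynomial (Fin (n + 1)) K)
    (f : MvPolynomial (Fin (n + 1)) K) (m d : ℕ) : Prop :=
  ∃ (s : Finset (Term n × Term n)) (c : Term n × Term n → K),
    (∀ p ∈ s, p.2 ∈ border O ∧ p.1 ∈ mulSet O lab p.2 ∧ ind O (p.1 + p.2) ≤ m ∧
      (monomial p.1 (1 : K) * g p.2).IsHomogeneous d) ∧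
    f = ∑ p ∈ s, c p • (monomial p.1 (1 : K) * g p.2)

/-- The subtype of terms of `𝒪` of degree `d`. -/
abbrev OdSub (O : Set (Term n)) (d : ℕ) : Type _ := {τ : Term n // τ ∈ Od O d}

lemma tdeg_component_lt {d : ℕ} (m : Term n) (h : tdeg m = d) (i : Fin (n + 1)) :
    m i < d + 1 := by
  have : m i ≤ tdeg m :=
    Finset.single_le_sum (f := fun j => m j) (fun j _ => Nat.zero_le _) (Finset.mem_univ i)
  omega

instance (O : Set (Term n)) (d : ℕ) : Finite (OdSub O d) := by
  have hinj : Function.Injective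
      (fun τ : OdSub O d => fun i : Fin (n + 1) =>
        (⟨τ.1 i, tdeg_component_lt τ.1 τ.2.2 i⟩ : Fin (d + 1))) := by
    intro a b hab
    apply Subtype.ext
    apply Finsupp.ext
    intro i
    simpa using congrArg Fin.val (congrFun hab i)
  exact Finite.of_injective _ hinj

noncomputable instance (O : Set (Term n)) (d : ℕ) : Fintype (OdSub O d) :=
  Fintype.ofFinite _

open scoped Classical in
/-- The `r`-th `d`-graded formal multiplication matrix of a prebasis `G`,
with rows indexed by `𝒪_{d+1}` and columns by `𝒪_d`. -/
noncomputable def multMatrix (O : Set (Term n))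
    (g : Term n → MvPolynomial (Fin (n + 1)) K) (r : Fin (n + 1)) (d : ℕ) :
    Matrix (OdSub O (d + 1)) (OdSub O d) K :=
  Matrix.of fun τ' τ =>
    if τ.1 + Finsupp.single r 1 ∈ O then
      (if τ.1 + Finsupp.single r 1 = τ'.1 then 1 else 0)
    else (monomial (τ.1 + Finsupp.single r 1) (1 : K)
            - g (τ.1 + Finsupp.single r 1)).coeff τ'.1

/-- The minimum degree of a border term. -/
noncomputable def minDegBorder (O : Set (Term n)) : ℕ := sInf (tdeg '' border O)

/-- The `d`-th Macaulay transformation `a^{⟨d⟩}`, computed greedily. -/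
noncomputable def macaulay : ℕ → ℕ → ℕ
  | 0, _ => 0
  | d + 1, a =>
    if a = 0 then 0
    else
      Nat.choose (sSup {k | Nat.choose k (d + 1) ≤ a} + 1) (d + 2) +
        macaulay d (a - Nat.choose (sSup {k | Nat.choose k (d + 1) ≤ a}) (d + 1))

/-- An ideal is generated in degrees `≤ m` if it is generated by its homogeneous
elements of degree `≤ m`. -/
def GeneratedInDegLE (I : Ideal (MvPolynomial (Fin (n + 1)) K)) (m : ℕ) : Prop :=
  I = Ideal.span {f | f ∈ I ∧ ∃ d ≤ m, f.IsHomogeneous d}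

/-!
Every term outside `𝒪` lies in the cone of the border term of largest label dividing it. For a
degree-ordered labeling, a term `η·σ` of the cone of `σ` has index exactly `deg η + 1`, while
every other term of the reductor `η·g_σ` is `η·τ` with `τ ∈ 𝒪` and so has index at most `deg η`.
Hence a reduction step at a term of index `k` only creates terms of index `< k`: reduction
terminates, since the multiset of indices of the support decreases in the Dershowitz–Manna order.
Cones of distinct border terms are disjoint, so in a nonzero linear combination of reductors the
cone term of a reductor with `deg η` maximal cannot cancel; thus `⟨𝒯G⟩ ∩ ⟨𝒪⟩ = 0`, and two
normal forms of `f`, whose difference lies in this intersection, coincide.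
-/

lemma _root_.Finset.isDershowitzMannaLT_map_val {α β : Type*} [DecidableEq α] [Preorder β]
    {s t : Finset α} (w : α → β) (hst : (s \ t).Nonempty)
    (h : ∀ x ∈ t \ s, ∃ y ∈ s \ t, w x < w y) :
    Multiset.IsDershowitzMannaLT (t.val.map w) (s.val.map w) := by
  have hsplit : ∀ u v : Finset α, u.val = (u ∩ v).val + (u \ v).val := fun u v => by
    rw [← Finset.filter_mem_eq_inter, ← Finset.filter_notMem_eq_sdiff, Finset.filter_val,
      Finset.filter_val, Multiset.filter_add_not]
  refine ⟨(t ∩ s).val.map w, (t \ s).val.map w, (s \ t).val.map w, ?_, ?_, ?_, ?_⟩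
  · rw [Ne, Multiset.empty_eq_zero, Multiset.map_eq_zero, Finset.val_eq_zero]
    exact hst.ne_empty
  · rw [← Multiset.map_add, ← hsplit]
  · rw [← Multiset.map_add, Finset.inter_comm, ← hsplit]
  · intro y hy
    obtain ⟨x, hx, rfl⟩ := Multiset.mem_map.mp hy
    obtain ⟨z, hz, hlt⟩ := h x hx
    exact ⟨w z, Multiset.mem_map_of_mem w hz, hlt⟩

section

lemma tdeg_add (a b : Term n) : tdeg (a + b) = tdeg a + tdeg b := by
  simp [tdeg, Finset.sum_add_distrib]

lemma tdeg_add_single_one (u : Term n) (r : Fin (n + 1)) :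
    tdeg (u + Finsupp.single r 1) = tdeg u + 1 := by
  rw [tdeg_add]
  simp [tdeg, Finsupp.single_apply]

lemma tdeg_mono : Monotone (tdeg (n := n)) := fun _ _ h =>
  Finset.sum_le_sum fun i _ => h i

lemma exists_eq_add_single_of_lt {τ t : Term n} (h : τ < t) :
    ∃ r u, τ ≤ u ∧ t = u + Finsupp.single r 1 := by
  obtain ⟨r, hr⟩ : ∃ r, τ r < t r := by
    by_contra! H
    exact h.not_ge H
  refine ⟨r, t - Finsupp.single r 1, fun i => ?_, ?_⟩
  · rcases eq_or_ne i r with rfl | hi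
    · simp only [Finsupp.coe_tsub, Pi.sub_apply, Finsupp.single_eq_same]
      omega
    · simpa [hi] using h.le i
  · ext i
    rcases eq_or_ne i r with rfl | hi
    · simp only [Finsupp.coe_add, Finsupp.coe_tsub, Pi.add_apply, Pi.sub_apply,
        Finsupp.single_eq_same]
      omega
    · simp [hi]

lemma lt_add_single_one (u : Term n) (r : Fin (n + 1)) : u < u + Finsupp.single r 1 :=
  lt_add_of_pos_right u (by simp [pos_iff_ne_zero])

variable {O : Set (Term n)} {lab : Term n → ℕ}

lemma IsOrderIdeal.zero_mem (hO : IsOrderIdeal O) : (0 : Term n) ∈ O := by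
  obtain ⟨τ, hτ⟩ := hO.1
  exact hO.2 τ hτ 0 zero_le

lemma add_notMem_of_mem_border (hO : IsOrderIdeal O) {σ : Term n} (hσ : σ ∈ border O)
    (η : Term n) : η + σ ∉ O :=
  fun h => hσ.1 (hO.2 _ h σ le_add_self)

lemma add_single_mem_borderClosure {t : Term n} {k : ℕ} (ht : t ∈ borderClosure O k)
    (r : Fin (n + 1)) : t + Finsupp.single r 1 ∈ borderClosure O (k + 1) := by
  by_cases h : t + Finsupp.single r 1 ∈ borderClosure O k
  · exact Or.inl h
  · exact Or.inr ⟨h, r, t, ht, rfl⟩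

lemma add_mem_borderClosure {t : Term n} {k : ℕ} (ht : t ∈ borderClosure O k) (s : Term n) :
    t + s ∈ borderClosure O (k + tdeg s) := by
  induction s using WellFoundedLT.induction with
  | _ s ih =>
  rcases eq_or_ne s 0 with rfl | hs
  · simpa [tdeg] using ht
  obtain ⟨r, u, -, rfl⟩ := exists_eq_add_single_of_lt (pos_iff_ne_zero.mpr hs)
  rw [← add_assoc, tdeg_add_single_one, ← add_assoc]
  exact add_single_mem_borderClosure (ih u (lt_add_single_one u r)) r

lemma exists_le_of_mem_borderClosure {t : Term n} {k : ℕ} (ht : t ∈ borderClosure O k) :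
    ∃ τ ∈ O, τ ≤ t ∧ tdeg t ≤ tdeg τ + k := by
  induction k generalizing t with
  | zero => exact ⟨t, ht, le_rfl, le_rfl⟩
  | succ k ih =>
    rcases ht with ht | ⟨-, r, u, hu, rfl⟩
    · obtain ⟨τ, hτ, hle, hdeg⟩ := ih ht
      exact ⟨τ, hτ, hle, by omega⟩
    · obtain ⟨τ, hτ, hle, hdeg⟩ := ih hu
      exact ⟨τ, hτ, hle.trans le_self_add, by rw [tdeg_add_single_one]; omega⟩

lemma exists_mem_border_le {τ t : Term n} (hτ : τ ∈ O) (hτt : τ ≤ t) (ht : t ∉ O) :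
    ∃ σ ∈ border O, σ ≤ t ∧ tdeg τ < tdeg σ := by
  induction t using WellFoundedLT.induction with
  | _ t ih =>
  obtain ⟨r, u, hτu, rfl⟩ :=
    exists_eq_add_single_of_lt (hτt.lt_of_ne (by rintro rfl; exact ht hτ))
  by_cases hu : u ∈ O
  · refine ⟨_, ⟨ht, r, u, hu, rfl⟩, le_rfl, ?_⟩
    rw [tdeg_add_single_one]
    exact Nat.lt_succ_of_le (tdeg_mono hτu)
  · obtain ⟨σ, hσ, hσu, hdeg⟩ := ih u (lt_add_single_one u r) hτu hu
    exact ⟨σ, hσ, hσu.trans le_self_add, hdeg⟩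

lemma ind_le_of_mem_borderClosure {t : Term n} {k : ℕ} (h : t ∈ borderClosure O k) :
    ind O t ≤ k :=
  Nat.sInf_le h

lemma mem_borderClosure_ind (hO : IsOrderIdeal O) (t : Term n) :
    t ∈ borderClosure O (ind O t) :=
  Nat.sInf_mem (s := {k | t ∈ borderClosure O k})
    ⟨tdeg t, by simpa using add_mem_borderClosure (k := 0) hO.zero_mem t⟩

lemma tdeg_le_of_mem_mulSet (hlab : DegOrderedLabeling O lab) {σ σ' η : Term n}
    (hσ : σ ∈ border O) (hη : η ∈ mulSet O lab σ) (hσ' : σ' ∈ border O) (hle : σ' ≤ η + σ) :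
    tdeg σ' ≤ tdeg σ := by
  rcases lt_trichotomy (lab σ') (lab σ) with h | h | h
  · exact hlab.2 σ' hσ' σ hσ h
  · rw [hlab.1 hσ' hσ h]
  · exact absurd hle (hη σ' hσ' h)

lemma eq_of_add_eq_add_of_mem_mulSet (hlab : DegOrderedLabeling O lab) {σ σ' η η' : Term n}
    (hσ : σ ∈ border O) (hσ' : σ' ∈ border O) (hη : η ∈ mulSet O lab σ)
    (hη' : η' ∈ mulSet O lab σ') (heq : η + σ = η' + σ') : η = η' ∧ σ = σ' := by
  have hσσ' : σ = σ' := by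
    refine hlab.1 hσ hσ' (le_antisymm ?_ ?_)
    · exact not_lt.mp fun h => hη' σ hσ h (heq ▸ le_add_self)
    · exact not_lt.mp fun h => hη σ' hσ' h (heq ▸ le_add_self)
  subst hσσ'
  exact ⟨add_right_cancel heq, rfl⟩

lemma exists_mem_cone (hO : IsOrderIdeal O) (lab : Term n → ℕ) {t : Term n} (ht : t ∉ O) :
    ∃ σ ∈ border O, t ∈ cone O lab σ := by
  classical
  obtain ⟨σ₁, hσ₁, hσ₁t, -⟩ := exists_mem_border_le hO.zero_mem zero_le ht
  obtain ⟨σ, hσ, hmax⟩ := ((Finset.Iic t).filter (· ∈ border O)).exists_max_image lab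
    ⟨σ₁, by simp [hσ₁, hσ₁t]⟩
  rw [Finset.mem_filter, Finset.mem_Iic] at hσ
  refine ⟨σ, hσ.2, t - σ, fun σ' hσ' hlt hle => ?_, tsub_add_cancel_of_le hσ.1⟩
  rw [tsub_add_cancel_of_le hσ.1] at hle
  exact (hmax σ' (by simp [hσ', hle])).not_gt hlt

theorem ind_add_of_mem_mulSet (hO : IsOrderIdeal O) (hlab : DegOrderedLabeling O lab)
    {σ η : Term n} (hσ : σ ∈ border O) (hη : η ∈ mulSet O lab σ) :
    ind O (η + σ) = tdeg η + 1 := by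
  apply le_antisymm
  · have hσ₁ : σ ∈ borderClosure O 1 := Or.inr hσ
    simpa [add_comm] using ind_le_of_mem_borderClosure (add_mem_borderClosure hσ₁ η)
  · obtain ⟨τ, hτ, hτle, hdeg⟩ :=
      exists_le_of_mem_borderClosure (mem_borderClosure_ind hO (η + σ))
    obtain ⟨σ', hσ', hσ'le, hτσ'⟩ :=
      exists_mem_border_le hτ hτle (add_notMem_of_mem_border hO hσ η)
    have := tdeg_le_of_mem_mulSet hlab hσ hη hσ' hσ'le
    rw [tdeg_add] at hdeg
    omega

variable {g : Term n → MvPolynomial (Fin (n + 1)) K}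

lemma monomial_mul_eq_sub (σ η : Term n) :
    monomial η (1 : K) * g σ = monomial (η + σ) 1 - monomial η 1 * (monomial σ 1 - g σ) := by
  rw [mul_sub, monomial_mul, mul_one, sub_sub_cancel]

lemma coeff_monomial_mul_self (hg : IsPrebasis O g) {σ : Term n} (hσ : σ ∈ border O)
    (η : Term n) : (monomial η (1 : K) * g σ).coeff (η + σ) = 1 := by
  have hσ' : (monomial σ (1 : K) - g σ).coeff σ = 0 :=
    notMem_support_iff.mp fun h => hσ.1 (hg σ hσ σ h).1
  rw [monomial_mul_eq_sub, coeff_sub, coeff_monomial, if_pos rfl, coeff_monomial_mul, hσ',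
    mul_zero, sub_zero]

lemma ind_le_of_mem_support (hg : IsPrebasis O g) {σ η θ : Term n} (hσ : σ ∈ border O)
    (hθ : θ ∈ (monomial η (1 : K) * g σ).support) (hne : θ ≠ η + σ) : ind O θ ≤ tdeg η := by
  classical
  rw [monomial_mul_eq_sub] at hθ
  replace hθ : θ ∈ (monomial η (1 : K) * (monomial σ 1 - g σ)).support := by
    rcases Finset.mem_union.mp (support_sub _ _ _ hθ) with h | h
    · exact absurd (Finset.mem_singleton.mp (support_monomial_subset h)) hne
    · exact h
  rw [mem_support_iff, coeff_monomial_mul'] at hθ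
  split_ifs at hθ with hηθ
  · have hτ := (hg σ hσ (θ - η) (mem_support_iff.mpr (by simpa using hθ))).1
    simpa [tsub_add_cancel_of_le hηθ] using
      ind_le_of_mem_borderClosure (add_mem_borderClosure (k := 0) hτ η)
  · exact absurd rfl hθ

lemma coeff_monomial_mul_eq_zero (hO : IsOrderIdeal O) (hlab : DegOrderedLabeling O lab)
    (hg : IsPrebasis O g) {σ η σ₀ η₀ : Term n} (hσ : σ ∈ border O) (hη : η ∈ mulSet O lab σ)
    (hσ₀ : σ₀ ∈ border O) (hη₀ : η₀ ∈ mulSet O lab σ₀) (hne : (η, σ) ≠ (η₀, σ₀))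
    (hdeg : tdeg η ≤ tdeg η₀) : (monomial η (1 : K) * g σ).coeff (η₀ + σ₀) = 0 := by
  by_contra h
  by_cases heq : η₀ + σ₀ = η + σ
  · obtain ⟨rfl, rfl⟩ := eq_of_add_eq_add_of_mem_mulSet hlab hσ hσ₀ hη hη₀ heq.symm
    exact hne rfl
  · have := ind_le_of_mem_support hg hσ (mem_support_iff.mpr h) heq
    rw [ind_add_of_mem_mulSet hO hlab hσ₀ hη₀] at this
    omega

lemma reductors_eq_image :
    reductors O lab g = (fun q : Term n × Term n => monomial q.1 (1 : K) * g q.2) ''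
      {q | q.2 ∈ border O ∧ q.1 ∈ mulSet O lab q.2} := by
  ext p
  simp only [reductors, Set.mem_ofPred_eq, Set.mem_image, Prod.exists]
  constructor
  · rintro ⟨σ, hσ, η, hη, rfl⟩
    exact ⟨η, σ, ⟨hσ, hη⟩, rfl⟩
  · rintro ⟨η, σ, ⟨hσ, hη⟩, rfl⟩
    exact ⟨σ, hσ, η, hη, rfl⟩

theorem eq_zero_of_mem_span_reductors (hO : IsOrderIdeal O) (hlab : DegOrderedLabeling O lab)
    (hg : IsPrebasis O g) {p : MvPolynomial (Fin (n + 1)) K}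
    (hp : p ∈ Submodule.span K (reductors O lab g)) (hpO : ↑p.support ⊆ O) : p = 0 := by
  classical
  rw [reductors_eq_image, Finsupp.mem_span_image_iff_linearCombination] at hp
  obtain ⟨c, hc, rfl⟩ := hp
  by_contra hne
  have hc₀ : c.support.Nonempty :=
    Finsupp.support_nonempty_iff.mpr (by rintro rfl; exact hne (map_zero _))
  obtain ⟨q₀, hq₀, hmax⟩ := c.support.exists_max_image (fun q => tdeg q.1) hc₀
  obtain ⟨hσ₀, hη₀⟩ : q₀.2 ∈ border O ∧ q₀.1 ∈ mulSet O lab q₀.2 := hc hq₀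
  have hcoeff : (Finsupp.linearCombination K (fun q : Term n × Term n =>
      monomial q.1 (1 : K) * g q.2) c).coeff (q₀.1 + q₀.2) = c q₀ := by
    rw [Finsupp.linearCombination_apply, Finsupp.sum, coeff_sum, Finset.sum_eq_single q₀]
    · rw [coeff_smul, coeff_monomial_mul_self hg hσ₀, smul_eq_mul, mul_one]
    · intro q hq hq₀
      obtain ⟨hσ, hη⟩ : q.2 ∈ border O ∧ q.1 ∈ mulSet O lab q.2 := hc hq
      rw [coeff_smul, coeff_monomial_mul_eq_zero hO hlab hg hσ hη hσ₀ hη₀ hq₀ (hmax q hq),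
        smul_zero]
    · exact fun h => absurd hq₀ h
  refine add_notMem_of_mem_border hO hσ₀ q₀.1 (hpO ?_)
  rw [Finset.mem_coe, mem_support_iff, hcoeff]
  exact Finsupp.mem_support_iff.mp hq₀

lemma Reduces.sub_mem_span {f h : MvPolynomial (Fin (n + 1)) K} (hr : Reduces O lab g f h) :
    f - h ∈ Submodule.span K (reductors O lab g) := by
  induction hr with
  | refl => simp
  | tail _ hstep ih =>
    obtain ⟨σ, hσ, η, hη, -, rfl⟩ := hstep
    rw [← sub_add]
    exact add_mem ih (Submodule.smul_mem _ _ (Submodule.subset_span ⟨σ, hσ, η, hη, rfl⟩))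

theorem Reduces.eq_of_support_subset (hO : IsOrderIdeal O) (hlab : DegOrderedLabeling O lab)
    (hg : IsPrebasis O g) {f h₁ h₂ : MvPolynomial (Fin (n + 1)) K} (hr₁ : Reduces O lab g f h₁)
    (hr₂ : Reduces O lab g f h₂) (h₁O : ↑h₁.support ⊆ O) (h₂O : ↑h₂.support ⊆ O) : h₁ = h₂ := by
  classical
  refine sub_eq_zero.mp (eq_zero_of_mem_span_reductors hO hlab hg ?_ ?_)
  · simpa using sub_mem hr₂.sub_mem_span hr₁.sub_mem_span
  · exact (Finset.coe_subset.mpr (support_sub _ h₁ h₂)).trans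
      (by simpa using Set.union_subset h₁O h₂O)

lemma exists_step_of_mem_support (hO : IsOrderIdeal O) (hlab : DegOrderedLabeling O lab)
    (hg : IsPrebasis O g) {f : MvPolynomial (Fin (n + 1)) K} {θ : Term n}
    (hθ : θ ∈ f.support) (hθO : θ ∉ O) :
    ∃ h, Step O lab g f h ∧ θ ∉ h.support ∧ ∀ θ' ∈ h.support \ f.support, ind O θ' < ind O θ := by
  classical
  obtain ⟨σ, hσ, η, hη, rfl⟩ := exists_mem_cone hO lab hθO
  refine ⟨_, ⟨σ, hσ, η, hη, hθ, rfl⟩, ?_, fun θ' hθ' => ?_⟩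
  · rw [notMem_support_iff, coeff_sub, coeff_smul, coeff_monomial_mul_self hg hσ, smul_eq_mul,
      mul_one, sub_self]
  · obtain ⟨hθ'h, hθ'f⟩ := Finset.mem_sdiff.mp hθ'
    have hθ'r : θ' ∈ (monomial η (1 : K) * g σ).support := by
      rcases Finset.mem_union.mp (support_sub _ _ _ hθ'h) with h | h
      · exact absurd h hθ'f
      · exact support_smul h
    rw [ind_add_of_mem_mulSet hO hlab hσ hη, Nat.lt_succ_iff]
    exact ind_le_of_mem_support hg hσ hθ'r (by rintro rfl; exact hθ'f hθ)

theorem exists_reduces_support_subset (hO : IsOrderIdeal O) (hlab : DegOrderedLabeling O lab)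
    (hg : IsPrebasis O g) (f : MvPolynomial (Fin (n + 1)) K) :
    ∃ h, Reduces O lab g f h ∧ ↑h.support ⊆ O := by
  classical
  induction f using (InvImage.wf (fun f : MvPolynomial (Fin (n + 1)) K =>
    f.support.val.map (ind O)) Multiset.wellFounded_isDershowitzMannaLT).induction with
  | _ f ih =>
  by_cases hf : ↑f.support ⊆ O
  · exact ⟨f, .refl, hf⟩
  obtain ⟨θ, hθ, hθO⟩ := Set.not_subset.mp hf
  obtain ⟨h, hstep, hθh, hlt⟩ := exists_step_of_mem_support hO hlab hg hθ hθO
  have hθ' : θ ∈ f.support \ h.support := Finset.mem_sdiff.mpr ⟨hθ, hθh⟩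
  obtain ⟨h', hred, hh'⟩ := ih h <|
    Finset.isDershowitzMannaLT_map_val _ ⟨θ, hθ'⟩ fun θ' hθ'' => ⟨θ, hθ', hlt θ' hθ''⟩
  exact ⟨h', .head hstep hred, hh'⟩

lemma support_subset_of_mem_spanTerms {S : Set (Term n)} {p : MvPolynomial (Fin (n + 1)) K}
    (hp : p ∈ spanTerms K S) : ↑p.support ⊆ S := by
  rwa [spanTerms, ← restrictSupport_eq_span] at hp

end

/-- **Confluence.** For a degree-ordered labeling, border reduction is confluent: the
`(∂𝒪)`-reduced form reached from `f` is unique; consequently each `f` reduces to a unique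
polynomial supported in `𝒪`. -/
theorem reduction_confluent (O : Set (Term n)) (hO : IsOrderIdeal O)
    (lab : Term n → ℕ) (hlab : DegOrderedLabeling O lab)
    (g : Term n → MvPolynomial (Fin (n + 1)) K) (hg : IsPrebasis O g)
    (f : MvPolynomial (Fin (n + 1)) K) :
    (∀ h₁ h₂ : MvPolynomial (Fin (n + 1)) K, h₁ ∈ spanTerms K O → h₂ ∈ spanTerms K O →
      Reduces O lab g f h₁ → Reduces O lab g f h₂ → h₁ = h₂) ∧
    ∃! h : MvPolynomial (Fin (n + 1)) K,
      Reduces O lab g f h ∧ ∀ τ ∈ h.support, τ ∈ O := by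
  refine ⟨fun h₁ h₂ hm₁ hm₂ hr₁ hr₂ => hr₁.eq_of_support_subset hO hlab hg hr₂
    (support_subset_of_mem_spanTerms hm₁) (support_subset_of_mem_spanTerms hm₂), ?_⟩
  obtain ⟨h, hr, hhO⟩ := exists_reduces_support_subset hO hlab hg f
  exact ⟨h, ⟨hr, hhO⟩, fun h' ⟨hr', hh'O⟩ => hr'.eq_of_support_subset hO hlab hg hr hh'O hhO⟩

end Border
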